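/- Let R be a local commutative ring. Then the Grothendieck–Witt group GW(R) is generated as a group by the classes ⟨a⟩ for units a ∈ R^×. In fact, for every symmetric bilinear space (M, φ) over R, the orthogonal direct sum (M, φ) ⊥ ⟨1⟩ admits an orthogonal basis, so [M, φ] = Σ_i [⟨a_i⟩] − [⟨1⟩] for suitable units a_i ∈ R^×. -/

import Mathlib

open TensorProduct

universe u

/-- A symmetric bilinear space over a commutative ring `R`: a finitely generated projective
`R`-module together with a symmetric bilinear form inducing an isomorphism onto the dual. -/
structure SymBilSpace (R : Type u) [CommRing R] : Type (u + 1) where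
  M : Type u
  [isAddCommGroup : AddCommGroup M]
  [isModule : Module R M]
  projective : Module.Projective R M
  finite : Module.Finite R M
  form : M →ₗ[R] M →ₗ[R] R
  symm : ∀ x y, form x y = form y x
  nondeg : Function.Bijective fun x ↦ form x

attribute [instance] SymBilSpace.isAddCommGroup SymBilSpace.isModule

namespace SymBilSpace

variable {R : Type u} [CommRing R]

/-- Isometry of symmetric bilinear spaces. -/
def Isometric (V W : SymBilSpace R) : Prop :=
  ∃ e : V.M ≃ₗ[R] W.M, ∀ x y, W.form (e x) (e y) = V.form x y

/-- Orthogonal direct sum of symmetric bilinear spaces. -/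
noncomputable def orthSum (V W : SymBilSpace R) : SymBilSpace R where
  M := V.M × W.M
  projective := by have := V.projective; have := W.projective; infer_instance
  finite := by have := V.finite; have := W.finite; infer_instance
  form := V.form.compl₁₂ (LinearMap.fst R V.M W.M) (LinearMap.fst R V.M W.M)
        + W.form.compl₁₂ (LinearMap.snd R V.M W.M) (LinearMap.snd R V.M W.M)
  symm := by
    intro x y
    simp only [LinearMap.add_apply, LinearMap.compl₁₂_apply, LinearMap.fst_apply,
      LinearMap.snd_apply]
    rw [V.symm x.1 y.1, W.symm x.2 y.2]
  nondeg := by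
    have key : (fun x ↦ (V.form.compl₁₂ (LinearMap.fst R V.M W.M) (LinearMap.fst R V.M W.M)
          + W.form.compl₁₂ (LinearMap.snd R V.M W.M) (LinearMap.snd R V.M W.M)) x)
        = (Module.dualProdDualEquivDual R V.M W.M) ∘
            (Prod.map (fun x ↦ V.form x) (fun y ↦ W.form y)) := by
      funext x
      ext y
      · simp [Module.dualProdDualEquivDual]
      · simp [Module.dualProdDualEquivDual]
    rw [key]
    exact (Module.dualProdDualEquivDual R V.M W.M).bijective.comp
      (V.nondeg.prodMap W.nondeg)

/-- The rank one symmetric bilinear space `⟨a⟩` associated to a unit `a`, given by the form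
`(x, y) ↦ a * x * y` on `R`. -/
noncomputable def unit (R : Type u) [CommRing R] (a : Rˣ) : SymBilSpace R where
  M := R
  projective := inferInstance
  finite := inferInstance
  form := LinearMap.mk₂ R (fun x y => (a : R) * x * y)
    (fun x x' y => by ring) (fun c x y => by simp [smul_eq_mul]; ring)
    (fun x y y' => by ring) (fun c x y => by simp [smul_eq_mul]; ring)
  symm := fun x y => by simp [LinearMap.mk₂_apply]; ring
  nondeg := by
    constructor
    · intro x y h
      have h1 : (a : R) * x * 1 = (a : R) * y * 1 := by
        have := congrArg (fun f : R →ₗ[R] R => f 1) h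
        simpa [LinearMap.mk₂_apply] using this
      have h2 : (a : R) * x = (a : R) * y := by simpa using h1
      calc x = (a⁻¹ : Rˣ) * ((a : R) * x) := by
                rw [← mul_assoc, Units.inv_mul, one_mul]
        _ = (a⁻¹ : Rˣ) * ((a : R) * y) := by rw [h2]
        _ = y := by rw [← mul_assoc, Units.inv_mul, one_mul]
    · intro f
      refine ⟨(a⁻¹ : Rˣ) * f 1, ?_⟩
      apply LinearMap.ext
      intro y
      have : f y = y * f 1 := by
        conv_lhs => rw [← mul_one y, ← smul_eq_mul, map_smul, smul_eq_mul]
      simp only [LinearMap.mk₂_apply]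
      rw [this]
      rw [show (a : R) * ((a⁻¹ : Rˣ) * f 1) * y = ((a : R) * (a⁻¹ : Rˣ)) * (f 1 * y) by ring,
        Units.mul_inv, one_mul, mul_comm]

/-- The hyperbolic plane over `R`: `R²` with the form of Gram matrix `[[0,1],[1,0]]`. -/
noncomputable def hyperbolic (R : Type u) [CommRing R] : SymBilSpace R where
  M := R × R
  projective := inferInstance
  finite := inferInstance
  form := LinearMap.mk₂ R (fun x y => x.1 * y.2 + x.2 * y.1)
    (fun x x' y => by simp [Prod.fst_add, Prod.snd_add]; ring)
    (fun c x y => by simp [Prod.smul_fst, Prod.smul_snd, smul_eq_mul]; ring)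
    (fun x y y' => by simp [Prod.fst_add, Prod.snd_add]; ring)
    (fun c x y => by simp [Prod.smul_fst, Prod.smul_snd, smul_eq_mul]; ring)
  symm := fun x y => by simp [LinearMap.mk₂_apply]; ring
  nondeg := by
    constructor
    · intro x y h
      have h1 := congrArg (fun f : R × R →ₗ[R] R => f (1, 0)) h
      have h2 := congrArg (fun f : R × R →ₗ[R] R => f (0, 1)) h
      simp only [LinearMap.mk₂_apply, mul_zero, mul_one, zero_add, add_zero] at h1 h2
      exact Prod.ext h2 h1
    · intro f
      refine ⟨(f (0, 1), f (1, 0)), ?_⟩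
      apply LinearMap.ext
      intro y
      have hy : y = y.1 • ((1 : R), (0 : R)) + y.2 • ((0 : R), (1 : R)) := by
        ext <;> simp
      have hfy : f y = y.1 * f (1, 0) + y.2 * f (0, 1) := by
        conv_lhs => rw [hy]
        rw [map_add, map_smul, map_smul, smul_eq_mul, smul_eq_mul]
      simp only [LinearMap.mk₂_apply]
      rw [hfy]
      ring

end SymBilSpace

/-- The defining relations of the Grothendieck-Witt group: the class of an orthogonal sum is
the sum of the classes, and isometric spaces have equal classes. -/
def gwRelation (R : Type u) [CommRing R] :
    FreeAbelianGroup (SymBilSpace R) → FreeAbelianGroup (SymBilSpace R) → Prop := fun x y =>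
  (∃ V W : SymBilSpace R, x = FreeAbelianGroup.of (V.orthSum W) ∧
      y = FreeAbelianGroup.of V + FreeAbelianGroup.of W) ∨
  (∃ V W : SymBilSpace R, V.Isometric W ∧ x = FreeAbelianGroup.of V ∧
      y = FreeAbelianGroup.of W)

/-- The additive congruence generated by the Grothendieck-Witt relations. -/
def gwCon (R : Type u) [CommRing R] : AddCon (FreeAbelianGroup (SymBilSpace R)) :=
  addConGen (gwRelation R)

/-- The Grothendieck-Witt group of a commutative ring: the group completion of the monoid of
isometry classes of symmetric bilinear spaces under orthogonal direct sum. -/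
def GW (R : Type u) [CommRing R] : Type (u + 1) := (gwCon R).Quotient

noncomputable instance (R : Type u) [CommRing R] : AddCommGroup (GW R) :=
  { (inferInstance : AddGroup ((gwCon R).Quotient)) with
    add_comm := fun a b => AddCon.induction_on₂ a b fun x y => by
      show ((x + y : FreeAbelianGroup (SymBilSpace R)) : (gwCon R).Quotient) = ↑(y + x)
      rw [add_comm] }

/-- The Grothendieck-Witt class of a symmetric bilinear space. -/
def GWclass {R : Type u} [CommRing R] (V : SymBilSpace R) : GW R :=
  (gwCon R).mk' (FreeAbelianGroup.of V)

/-- The orthogonal complement of a submodule with respect to a bilinear form. -/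
def orthComp {R : Type u} [CommRing R] {M : Type u} [AddCommGroup M] [Module R M]
    (φ : M →ₗ[R] M →ₗ[R] R) (N : Submodule R M) : Submodule R M where
  carrier := {m | ∀ n ∈ N, φ m n = 0}
  add_mem' := fun {x y} hx hy => by
    intro n hn
    simp [hx n hn, hy n hn]
  zero_mem' := by intro n hn; simp
  smul_mem' := fun c x hx => by
    intro n hn
    simp [hx n hn]

/-- A bilinear pairing between two modules is perfect if both induced maps to the duals
are bijective. -/
def IsPerfect {R : Type u} [CommRing R] {P Q : Type u} [AddCommGroup P] [Module R P]
    [AddCommGroup Q] [Module R Q] (β : P →ₗ[R] Q →ₗ[R] R) : Prop :=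
  (Function.Bijective fun x ↦ β x) ∧ (Function.Bijective fun y ↦ β.flip y)

/-- The hyperbolic-type symmetric bilinear space on `P ⊕ Q` associated to a perfect pairing
`β : P × Q → R`, with form `((x,y),(x',y')) ↦ β x y' + β x' y`. -/
noncomputable def hypPair {R : Type u} [CommRing R] {P Q : Type u} [AddCommGroup P] [Module R P]
    [AddCommGroup Q] [Module R Q] (hP : Module.Projective R P) (hP' : Module.Finite R P)
    (hQ : Module.Projective R Q) (hQ' : Module.Finite R Q)
    (β : P →ₗ[R] Q →ₗ[R] R) (hβ : IsPerfect β) : SymBilSpace R where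
  M := P × Q
  projective := by infer_instance
  finite := by infer_instance
  form := β.compl₁₂ (LinearMap.fst R P Q) (LinearMap.snd R P Q)
        + β.flip.compl₁₂ (LinearMap.snd R P Q) (LinearMap.fst R P Q)
  symm := by
    intro x y
    simp only [LinearMap.add_apply, LinearMap.compl₁₂_apply, LinearMap.fst_apply,
      LinearMap.snd_apply, LinearMap.flip_apply]
    exact add_comm _ _
  nondeg := by
    have key : (fun x ↦ (β.compl₁₂ (LinearMap.fst R P Q) (LinearMap.snd R P Q)
          + β.flip.compl₁₂ (LinearMap.snd R P Q) (LinearMap.fst R P Q)) x)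
        = (Module.dualProdDualEquivDual R P Q) ∘
            (Prod.map (fun y ↦ β.flip y) (fun x ↦ β x)) ∘ ⇑(Equiv.prodComm P Q) := by
      funext x
      ext y
      · simp [Module.dualProdDualEquivDual]
      · simp [Module.dualProdDualEquivDual]
    rw [key]
    exact (Module.dualProdDualEquivDual R P Q).bijective.comp
      ((hβ.2.prodMap hβ.1).comp (Equiv.prodComm P Q).bijective)

/-!
Over a local ring a vector `v` with `φ v v` a unit splits off: `M = R v ⊥ v^⊥`, and `v^⊥` is again
a symmetric bilinear space, of rank one less. An orthogonal basis is then built by induction on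
the rank, provided the complement keeps a vector of unit length. If `v^⊥` has none, take
`x, y ∈ v^⊥` with `φ x y = 1`. As a non-unit plus a unit is a unit, `w = x + v` has unit length
`φ x x + φ v v`, and `z = y - (φ w w)⁻¹ • w ∈ w^⊥` has unit length `φ y y - (φ w w)⁻¹`, so `w`
can replace `v`.
In `(M, φ) ⊥ ⟨1⟩` the vector `(0, 1)` has length `1`, and an orthogonal basis with unit lengths
`aᵢ` is an isometry onto `⟨a₁⟩ ⊥ ⋯ ⊥ ⟨aₙ⟩`.
-/

theorem IsLocalRing.isUnit_add_of_not_isUnit {R : Type*} [CommRing R] [IsLocalRing R] {a u : R}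
    (ha : ¬IsUnit a) (hu : IsUnit u) : IsUnit (a + u) :=
  (isUnit_or_isUnit_of_isUnit_add (by simpa using hu : IsUnit (a + u + -a))).resolve_right
    (by simpa using ha)

namespace LinearMap.BilinForm

open Module LinearMap

variable {R M : Type*} [CommRing R] [AddCommGroup M] [Module R M] {φ : LinearMap.BilinForm R M}

section OrthogonalBasis

variable {ι : Type*} [Fintype ι] {b : Basis ι R M}

theorem apply_eq_sum_of_isOrthoᵢ (hb : φ.IsOrthoᵢ b) (x y : M) :
    φ x y = ∑ i, φ (b i) (b i) * b.repr x i * b.repr y i := by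
  conv_lhs => rw [← b.sum_repr x, ← b.sum_repr y]
  simp only [map_sum, map_smul, LinearMap.sum_apply, LinearMap.smul_apply, smul_eq_mul]
  refine Finset.sum_congr rfl fun i _ => ?_
  rw [Finset.sum_eq_single i (fun j _ hj => by rw [hb hj, mul_zero]) (by simp)]
  ring

theorem isUnit_apply_self_of_isOrthoᵢ (hφ : Function.Surjective φ) (hb : φ.IsOrthoᵢ b) (i : ι) :
    IsUnit (φ (b i) (b i)) := by
  classical
  obtain ⟨w, hw⟩ := hφ (b.coord i)
  have hwb := apply_eq_sum_of_isOrthoᵢ hb w (b i)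
  simp only [hw, Basis.coord_apply, Basis.repr_self, Finsupp.single_apply, mul_ite, mul_one,
    mul_zero, Finset.sum_ite_eq, Finset.mem_univ, if_true] at hwb
  exact .of_mul_eq_one _ hwb.symm

end OrthogonalBasis

section UnitVector

variable {v : M}

noncomputable def orthProj (hv : IsUnit (φ v v)) : M →ₗ[R] ker (φ v) :=
  codRestrict (ker (φ v)) (LinearMap.id - toSpanSingleton R M v ∘ₗ (((hv.unit⁻¹ : Rˣ) : R) • φ v))
    fun x => by
      simp only [mem_ker, LinearMap.sub_apply, LinearMap.id_apply, LinearMap.comp_apply,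
        LinearMap.smul_apply, toSpanSingleton_apply, map_sub, map_smul, smul_eq_mul]
      rw [mul_comm, ← mul_assoc, IsUnit.mul_val_inv, one_mul, sub_self]

theorem coe_orthProj (hv : IsUnit (φ v v)) (x : M) :
    (orthProj hv x : M) = x - (((hv.unit⁻¹ : Rˣ) : R) * φ v x) • v := by
  simp [orthProj, mul_smul]

theorem orthProj_coe (hv : IsUnit (φ v v)) (y : ker (φ v)) : orthProj hv y = y := by
  ext; simp [coe_orthProj, mem_ker.mp y.2]

theorem orthProj_self (hv : IsUnit (φ v v)) : orthProj hv v = 0 := by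
  ext; simp [coe_orthProj]

noncomputable def basisConsKer (hv : IsUnit (φ v v)) {n : ℕ} (b : Basis (Fin n) R (ker (φ v))) :
    Basis (Fin (n + 1)) R M :=
  b.mkFinCons v
    (fun c x hx hcx => by
      have := congrArg (φ v) hcx
      rw [map_add, map_smul, mem_ker.mp hx, map_zero, add_zero, smul_eq_mul] at this
      exact (hv.mul_left_eq_zero).mp this)
    (fun z => ⟨-(((hv.unit⁻¹ : Rˣ) : R) * φ v z), by
      simpa [coe_orthProj, sub_eq_add_neg, neg_smul] using (orthProj hv z).2⟩)

theorem isOrthoᵢ_basisConsKer (hsymm : ∀ x y, φ x y = φ y x) (hv : IsUnit (φ v v)) {n : ℕ}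
    {b : Basis (Fin n) R (ker (φ v))} (hb : (φ.restrict _).IsOrthoᵢ b) :
    φ.IsOrthoᵢ (basisConsKer hv b) := by
  intro i j hij
  rw [basisConsKer, Basis.coe_mkFinCons]
  cases i using Fin.cases with
  | zero => cases j using Fin.cases with
    | zero => exact absurd rfl hij
    | succ j => exact mem_ker.mp (b j).2
  | succ i => cases j using Fin.cases with
    | zero => exact (hsymm _ _).trans (mem_ker.mp (b i).2)
    | succ j => exact hb (by simpa [Fin.ext_iff] using hij)

theorem finite_ker (hv : IsUnit (φ v v)) [Module.Finite R M] : Module.Finite R (ker (φ v)) :=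
  .of_surjective (orthProj hv) fun y => ⟨y, orthProj_coe hv y⟩

theorem projective_ker (hv : IsUnit (φ v v)) [Projective R M] : Projective R (ker (φ v)) :=
  .of_split (ker (φ v)).subtype (orthProj hv) (LinearMap.ext (orthProj_coe hv))

theorem bijective_restrict_ker (hsymm : ∀ x y, φ x y = φ y x) (hφ : Function.Bijective φ)
    (hv : IsUnit (φ v v)) :
    Function.Bijective (φ.restrict (ker (φ v))) := by
  have hker : ∀ y : ker (φ v), φ y v = 0 := fun y => by rw [hsymm]; exact mem_ker.mp y.2
  constructor
  · intro y y' h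
    refine Subtype.ext (hφ.injective (LinearMap.ext fun x => ?_))
    have hx : x = (((hv.unit⁻¹ : Rˣ) : R) * φ v x) • v + orthProj hv x := by
      rw [coe_orthProj]; abel
    have := LinearMap.congr_fun h (orthProj hv x)
    rw [hx, map_add, map_add, map_smul, map_smul, hker, hker]
    simpa using this
  · intro f
    obtain ⟨w, hw⟩ := hφ.surjective (f ∘ₗ orthProj hv)
    have hwv : φ v w = 0 := by rw [hsymm, hw, LinearMap.comp_apply, orthProj_self, map_zero]
    refine ⟨⟨w, hwv⟩, LinearMap.ext fun y => ?_⟩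
    simp [hw, orthProj_coe]

end UnitVector

section IsLocalRing

variable [IsLocalRing R] {v : M}

theorem exists_orthogonal_unit_pair_of_not_isUnit (hsymm : ∀ x y, φ x y = φ y x) {x y : M}
    (hv : IsUnit (φ v v)) (hx : φ v x = 0) (hy : φ v y = 0) (hxy : φ x y = 1)
    (hxx : ¬IsUnit (φ x x)) (hyy : ¬IsUnit (φ y y)) :
    ∃ w, IsUnit (φ w w) ∧ ∃ z ∈ ker (φ w), IsUnit (φ z z) := by
  have hww : φ (x + v) (x + v) = φ x x + φ v v := by
    simp only [map_add, LinearMap.add_apply, hsymm x v, hx]; ring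
  have hw : IsUnit (φ (x + v) (x + v)) := hww ▸ IsLocalRing.isUnit_add_of_not_isUnit hxx hv
  have hwy : φ (x + v) y = 1 := by simp [hxy, hy]
  set c : R := ((hw.unit⁻¹ : Rˣ) : R)
  have hc : c * φ (x + v) (x + v) = 1 := hw.val_inv_mul
  refine ⟨x + v, hw, y - c • (x + v), ?_, ?_⟩
  · rw [mem_ker, map_sub, map_smul, hwy, smul_eq_mul, hc, sub_self]
  · have hzz : φ (y - c • (x + v)) (y - c • (x + v)) = φ y y + -c := by
      simp only [map_sub, map_smul, LinearMap.sub_apply, LinearMap.smul_apply, smul_eq_mul,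
        hsymm y (x + v), hwy]
      linear_combination c * hc
    rw [hzz]
    exact IsLocalRing.isUnit_add_of_not_isUnit hyy (hw.unit⁻¹.isUnit.neg)

variable [Module.Finite R M] [Projective R M]

theorem free_ker (hv : IsUnit (φ v v)) : Module.Free R (ker (φ v)) :=
  have := finite_ker hv
  have := projective_ker hv
  free_of_flat_of_isLocalRing

theorem finrank_eq_finrank_ker_add_one (hv : IsUnit (φ v v)) :
    finrank R M = finrank R (ker (φ v)) + 1 := by
  have := finite_ker hv
  have := free_ker hv
  rw [finrank_eq_card_basis (basisConsKer hv (finBasis R (ker (φ v)))), Fintype.card_fin]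

theorem exists_orthogonal_unit_pair (hsymm : ∀ x y, φ x y = φ y x)
    (hφ : Function.Surjective φ) (hv : IsUnit (φ v v)) (hk : finrank R (ker (φ v)) ≠ 0) :
    ∃ w, IsUnit (φ w w) ∧ ∃ z ∈ ker (φ w), IsUnit (φ z z) := by
  by_cases h : ∃ z ∈ ker (φ v), IsUnit (φ z z)
  · obtain ⟨z, hz, hzz⟩ := h
    exact ⟨z, hzz, v, (hsymm z v).trans (mem_ker.mp hz), hv⟩
  push Not at h
  have := finite_ker hv
  have := free_ker hv
  let b := finBasis R (ker (φ v))
  let i : Fin (finrank R (ker (φ v))) := ⟨0, Nat.pos_of_ne_zero hk⟩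
  obtain ⟨x, hx⟩ := hφ (b.coord i ∘ₗ orthProj hv)
  have hxv : φ v x = 0 := by rw [hsymm, hx, LinearMap.comp_apply, orthProj_self, map_zero]
  have hxb : φ x (b i) = 1 := by
    rw [hx, LinearMap.comp_apply, orthProj_coe, Basis.coord_apply, Basis.repr_self,
      Finsupp.single_eq_same]
  exact exists_orthogonal_unit_pair_of_not_isUnit hsymm hv hxv (mem_ker.mp (b i).2) hxb
    (h x hxv) (h _ (b i).2)

theorem exists_basis_isOrthoᵢ_of_ker (hsymm : ∀ x y, φ x y = φ y x) (hv : IsUnit (φ v v))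
    (h : ∃ b : Basis (Fin (finrank R (ker (φ v)))) R (ker (φ v)), (φ.restrict _).IsOrthoᵢ b) :
    ∃ b : Basis (Fin (finrank R M)) R M, φ.IsOrthoᵢ b := by
  obtain ⟨b, hb⟩ := h
  rw [finrank_eq_finrank_ker_add_one hv]
  exact ⟨basisConsKer hv b, isOrthoᵢ_basisConsKer hsymm hv hb⟩

theorem exists_basis_isOrthoᵢ (hsymm : ∀ x y, φ x y = φ y x) (hφ : Function.Bijective φ)
    (hv : IsUnit (φ v v)) : ∃ b : Basis (Fin (finrank R M)) R M, φ.IsOrthoᵢ b := by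
  obtain ⟨n, hn⟩ : ∃ n, finrank R M = n + 1 := ⟨_, finrank_eq_finrank_ker_add_one hv⟩
  induction n generalizing M with
  | zero =>
    have := finite_ker hv
    have := free_ker hv
    have hk : finrank R (ker (φ v)) = 0 := by have := finrank_eq_finrank_ker_add_one hv; omega
    exact exists_basis_isOrthoᵢ_of_ker hsymm hv ⟨finBasis R _, fun i => (i.cast hk).elim0⟩
  | succ n ih =>
    obtain ⟨w, hw, z, hz, hzz⟩ := exists_orthogonal_unit_pair hsymm hφ.surjective hv
      (by have := finrank_eq_finrank_ker_add_one hv; omega)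
    have := finite_ker hw
    have := projective_ker hw
    refine exists_basis_isOrthoᵢ_of_ker hsymm hw (ih (φ := φ.restrict _) (fun x y => hsymm x y)
      (bijective_restrict_ker hsymm hφ hw) (v := ⟨z, hz⟩) hzz ?_)
    have := finrank_eq_finrank_ker_add_one hw
    omega

end IsLocalRing

end LinearMap.BilinForm

theorem GW.addSubgroup_eq_top_of_GWclass_mem {R : Type u} [CommRing R] {S : AddSubgroup (GW R)}
    (h : ∀ V, GWclass V ∈ S) : S = ⊤ := by
  refine eq_top_iff.mpr fun g _ => AddCon.induction_on g fun x => ?_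
  change (gwCon R).mk' x ∈ S
  induction x using FreeAbelianGroup.induction_on with
  | zero => rw [map_zero]; exact S.zero_mem
  | of V => exact h V
  | neg x hx => rw [map_neg]; exact S.neg_mem hx
  | add x y hx hy => rw [map_add]; exact S.add_mem hx hy

namespace SymBilSpace

open Module LinearMap

variable {R : Type u} [CommRing R]

theorem GWclass_orthSum (V W : SymBilSpace R) :
    GWclass (V.orthSum W) = GWclass V + GWclass W :=
  (AddCon.eq (gwCon R)).mpr (AddConGen.Rel.of _ _ (Or.inl ⟨V, W, rfl, rfl⟩))

theorem Isometric.GWclass_eq {V W : SymBilSpace R} (h : V.Isometric W) :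
    GWclass V = GWclass W :=
  (AddCon.eq (gwCon R)).mpr (AddConGen.Rel.of _ _ (Or.inr ⟨V, W, h, rfl, rfl⟩))

theorem GWclass_eq_zero_of_subsingleton (V : SymBilSpace R) [Subsingleton V.M] :
    GWclass V = 0 := by
  have : Subsingleton (V.orthSum V).M := inferInstanceAs (Subsingleton (V.M × V.M))
  have hV : V.Isometric (V.orthSum V) :=
    ⟨{ toLinearMap := 0, invFun := 0, left_inv := fun _ => Subsingleton.elim _ _,
        right_inv := fun _ => Subsingleton.elim _ _ },
      fun x y => by simp [Subsingleton.elim x 0]⟩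
  simpa [GWclass_orthSum] using hV.GWclass_eq

noncomputable def diag {n : ℕ} (a : Fin n → Rˣ) : SymBilSpace R where
  M := Fin n → R
  projective := inferInstance
  finite := inferInstance
  form := (dotProductEquiv R (Fin n)).toLinearMap ∘ₗ
    (LinearEquiv.piCongrRight fun i => LinearEquiv.smulOfUnit (a i)).toLinearMap
  symm x y := show ∑ i, (a i : R) * x i * y i = ∑ i, (a i : R) * y i * x i from
    Finset.sum_congr rfl fun i _ => by ring
  nondeg := (dotProductEquiv R _).bijective.comp (LinearEquiv.piCongrRight _).bijective

theorem GWclass_diag {n : ℕ} (a : Fin n → Rˣ) :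
    GWclass (diag a) = ∑ i, GWclass (unit R (a i)) := by
  induction n with
  | zero =>
    have : Subsingleton (diag a).M := inferInstanceAs (Subsingleton (Fin 0 → R))
    simpa using GWclass_eq_zero_of_subsingleton (diag a)
  | succ n ih =>
    have hsplit : (diag a).Isometric ((unit R (a 0)).orthSum (diag (Fin.tail a))) :=
      ⟨(Fin.consLinearEquiv R fun _ => R).symm, fun x y => by
        show _ = ∑ i, (a i : R) * x i * y i
        rw [Fin.sum_univ_succ]
        rfl⟩
    rw [hsplit.GWclass_eq, GWclass_orthSum, ih, Fin.sum_univ_succ]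
    rfl

theorem isometric_diag_of_isOrthoᵢ (V : SymBilSpace R) {n : ℕ} {b : Basis (Fin n) R V.M}
    (hb : V.form.IsOrthoᵢ b) {a : Fin n → Rˣ} (ha : ∀ i, (a i : R) = V.form (b i) (b i)) :
    V.Isometric (diag a) :=
  ⟨b.equivFun, fun x y => by
    show ∑ i, (a i : R) * b.equivFun x i * b.equivFun y i = _
    simp [BilinForm.apply_eq_sum_of_isOrthoᵢ hb x y, ha]⟩

section IsLocalRing

variable [IsLocalRing R]

theorem exists_basis_isOrthoᵢ_orthSum_unit_one (V : SymBilSpace R) :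
    ∃ b : Basis (Fin (finrank R (V.orthSum (unit R 1)).M)) R (V.orthSum (unit R 1)).M,
      (V.orthSum (unit R 1)).form.IsOrthoᵢ b := by
  have := (V.orthSum (unit R 1)).finite
  have := (V.orthSum (unit R 1)).projective
  refine BilinForm.exists_basis_isOrthoᵢ (V.orthSum _).symm (V.orthSum _).nondeg
    (v := ((0 : V.M), (1 : R))) ?_
  show IsUnit (V.form 0 0 + ((1 : Rˣ) : R) * 1 * 1)
  simp

theorem exists_GWclass_eq_sum_sub (V : SymBilSpace R) :
    ∃ (m : ℕ) (a : Fin m → Rˣ),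
      GWclass V = (∑ i, GWclass (unit R (a i))) - GWclass (unit R 1) := by
  obtain ⟨b, hb⟩ := exists_basis_isOrthoᵢ_orthSum_unit_one V
  let a i := (BilinForm.isUnit_apply_self_of_isOrthoᵢ (V.orthSum _).nondeg.surjective hb i).unit
  refine ⟨_, a, eq_sub_of_add_eq ?_⟩
  have hdiag := isometric_diag_of_isOrthoᵢ _ hb (a := a) fun i => IsUnit.unit_spec _
  rw [← GWclass_orthSum, hdiag.GWclass_eq, GWclass_diag]

end IsLocalRing

end SymBilSpace

/-- **Statement 10.** Over a local ring `R`, the Grothendieck–Witt group `GW(R)` is generated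
as a group by the classes `⟨a⟩` for units `a ∈ Rˣ`.  In fact, for every symmetric bilinear
space `(M, φ)` over `R`, the orthogonal sum `(M, φ) ⊥ ⟨1⟩` admits an orthogonal basis, so
`[M, φ] = Σᵢ [⟨aᵢ⟩] − [⟨1⟩]` for suitable units `aᵢ`. -/
theorem statement10 (R : Type) [CommRing R] [IsLocalRing R] :
    (AddSubgroup.closure {x : GW R | ∃ a : Rˣ, x = GWclass (SymBilSpace.unit R a)} = ⊤) ∧
    ∀ V : SymBilSpace R,
      (∃ b : Module.Basis (Fin (Module.finrank R (V.orthSum (SymBilSpace.unit R 1)).M)) R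
          (V.orthSum (SymBilSpace.unit R 1)).M,
        ∀ i j, i ≠ j → (V.orthSum (SymBilSpace.unit R 1)).form (b i) (b j) = 0) ∧
      ∃ (m : ℕ) (a : Fin m → Rˣ),
        GWclass V
          = (∑ i, GWclass (SymBilSpace.unit R (a i))) - GWclass (SymBilSpace.unit R 1) := by
  refine ⟨GW.addSubgroup_eq_top_of_GWclass_mem fun V => ?_,
    fun V => ⟨V.exists_basis_isOrthoᵢ_orthSum_unit_one, V.exists_GWclass_eq_sum_sub⟩⟩
  obtain ⟨m, a, ha⟩ := V.exists_GWclass_eq_sum_sub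
  rw [ha]
  exact sub_mem (sum_mem fun i _ => AddSubgroup.subset_closure ⟨a i, rfl⟩)
    (AddSubgroup.subset_closure ⟨1, rfl⟩)
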